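/- The abelianization of G is infinite cyclic: there is a group isomorphism from the abelianization of G to ℤ sending the class of a to −1 and the class of b to 1. -/

import Mathlib

/-- The generator `a` of the free group on two generators. -/
def fa : FreeGroup (Fin 2) := FreeGroup.of 0
/-- The generator `b` of the free group on two generators. -/
def fb : FreeGroup (Fin 2) := FreeGroup.of 1

/-- The two relators `(b·a²)·(a³·b²)⁻¹` and `(b²·a)·(a²·b³)⁻¹`. -/
def csRels : Set (FreeGroup (Fin 2)) :=
  {(fb * fa ^ 2) * (fa ^ 3 * fb ^ 2)⁻¹, (fb ^ 2 * fa) * (fa ^ 2 * fb ^ 3)⁻¹}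

/-- The group `G = ⟨a, b ∣ b·a² = a³·b², b²·a = a²·b³⟩`. -/
abbrev G : Type := PresentedGroup csRels

/-- The image of `a` in `G`. -/
def ga : G := PresentedGroup.of 0
/-- The image of `b` in `G`. -/
def gb : G := PresentedGroup.of 1

/-!
In the abelianization the first relation reads `b + 2a = 3a + 2b`, i.e. `a = -b`, so the class
of `b` generates it. Conversely `a ↦ -1`, `b ↦ 1` respects both relations and hence defines a
homomorphism `G → ℤ` sending the class of `b` to `1`, which forces it to be an isomorphism.
-/

open Multiplicative (ofAdd toAdd)

theorem mul_eq_one_of_mul_pow_two_eq_pow_three_mul_pow_two {A : Type*} [CommGroup A] {x y : A}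
    (h : y * x ^ 2 = x ^ 3 * y ^ 2) : x * y = 1 := by
  refine mul_left_cancel (a := y * x ^ 2) ?_
  calc y * x ^ 2 * (x * y) = x ^ 3 * y ^ 2 := by
        simp only [pow_succ, pow_zero, one_mul, mul_assoc, mul_comm, mul_left_comm]
    _ = y * x ^ 2 * 1 := by rw [h, mul_one]

theorem MonoidHom.bijective_of_zpowers_eq_top {A : Type*} [Group A] {g : A}
    (hg : Subgroup.zpowers g = ⊤) (f : A →* Multiplicative ℤ) (hf : f g = ofAdd 1) :
    Function.Bijective f := by
  have hpow (n : ℤ) : f (g ^ n) = ofAdd n := by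
    rw [map_zpow, hf, ← ofAdd_zsmul, smul_eq_mul, mul_one]
  have hmem (x : A) : ∃ n : ℤ, g ^ n = x :=
    Subgroup.mem_zpowers_iff.mp (hg ▸ Subgroup.mem_top x)
  refine ⟨fun x y hxy => ?_, fun z => ⟨g ^ toAdd z, hpow _⟩⟩
  obtain ⟨m, rfl⟩ := hmem x
  obtain ⟨n, rfl⟩ := hmem y
  rw [hpow, hpow] at hxy
  rw [ofAdd.injective hxy]

theorem gb_mul_ga_sq : gb * ga ^ 2 = ga ^ 3 * gb ^ 2 :=
  PresentedGroup.mk_eq_mk_of_mul_inv_mem (Set.mem_insert _ _)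

theorem of_ga_mul_of_gb : Abelianization.of ga * Abelianization.of gb = 1 :=
  mul_eq_one_of_mul_pow_two_eq_pow_three_mul_pow_two <| by
    simpa only [map_mul, map_pow] using congrArg Abelianization.of gb_mul_ga_sq

theorem zpowers_of_gb_eq_top : Subgroup.zpowers (Abelianization.of gb) = ⊤ := by
  refine (Subgroup.eq_top_iff' _).mpr fun x => QuotientGroup.induction_on x fun y => ?_
  refine PresentedGroup.generated_by _
    ((Subgroup.zpowers (Abelianization.of gb)).comap Abelianization.of) (fun j => ?_) y
  fin_cases j
  · change Abelianization.of ga ∈ Subgroup.zpowers (Abelianization.of gb)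
    rw [eq_inv_of_mul_eq_one_left of_ga_mul_of_gb]
    exact inv_mem (Subgroup.mem_zpowers _)
  · exact Subgroup.mem_zpowers _

theorem csRels_lift_eq_one :
    ∀ r ∈ csRels, FreeGroup.lift ![ofAdd (-1 : ℤ), ofAdd 1] r = 1 := by
  rintro r (rfl | rfl) <;> rfl

def toMultiplicativeInt : G →* Multiplicative ℤ :=
  PresentedGroup.toGroup csRels_lift_eq_one

/-- The abelianization of `G` is infinite cyclic, via an isomorphism sending the class of
`a` to `−1 ∈ ℤ` and the class of `b` to `1 ∈ ℤ`. -/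
theorem abelianization_infinite_cyclic :
    ∃ ψ : Abelianization G ≃* Multiplicative ℤ,
      ψ (Abelianization.of ga) = Multiplicative.ofAdd (-1) ∧
      ψ (Abelianization.of gb) = Multiplicative.ofAdd 1 := by
  let ψ := Abelianization.lift toMultiplicativeInt
  have hψa : ψ (Abelianization.of ga) = ofAdd (-1) := PresentedGroup.toGroup.of csRels_lift_eq_one
  have hψb : ψ (Abelianization.of gb) = ofAdd 1 := PresentedGroup.toGroup.of csRels_lift_eq_one
  exact ⟨MulEquiv.ofBijective ψ (ψ.bijective_of_zpowers_eq_top zpowers_of_gb_eq_top hψb),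
    hψa, hψb⟩
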